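/- Monotonicity of log-sum-exp in temperature: for d : Fin C → ℝ, the map τ ↦ -(2/τ) log ∑_c exp(-(τ/2) d_c) is non-decreasing on (0, ∞). -/

import Mathlib

/-!
For `0 < s` every cost dominates the free energy, `F s ≤ dᵢ`, so for `s ≤ t` each weight
`exp (-t (dᵢ - F s))` is at most `exp (-s (dᵢ - F s))`, and the latter sum to `1`.
Hence `∑ᵢ exp (-t dᵢ) ≤ exp (-t F s)`, which is `F s ≤ F t`.
-/

open Real Set

noncomputable def freeEnergy {ι : Type*} [Fintype ι] (d : ι → ℝ) (β : ℝ) : ℝ :=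
  -β⁻¹ * log (∑ i, exp (-β * d i))

namespace freeEnergy

variable {ι : Type*} [Fintype ι] (d : ι → ℝ)

theorem le_apply {β : ℝ} (hβ : 0 < β) (i : ι) : freeEnergy d β ≤ d i := by
  have hsum : exp (-β * d i) ≤ ∑ j, exp (-β * d j) :=
    Finset.single_le_sum (fun j _ => (exp_pos (-β * d j)).le) (Finset.mem_univ i)
  have hlog : -β * d i ≤ log (∑ j, exp (-β * d j)) :=
    (le_log_iff_exp_le ((exp_pos _).trans_le hsum)).mpr hsum
  calc freeEnergy d β ≤ -β⁻¹ * (-β * d i) :=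
        mul_le_mul_of_nonpos_left hlog (neg_nonpos.mpr (inv_pos.mpr hβ).le)
    _ = d i := by field_simp

theorem exp_neg_mul_eq_sum_exp [Nonempty ι] {β : ℝ} (hβ : β ≠ 0) :
    exp (-β * freeEnergy d β) = ∑ i, exp (-β * d i) := by
  rw [freeEnergy, ← mul_assoc, neg_mul_neg, mul_inv_cancel₀ hβ, one_mul,
    exp_log (Finset.sum_pos (fun i _ => exp_pos _) Finset.univ_nonempty)]

theorem sum_exp_le_exp_mul [Nonempty ι] {s t : ℝ} (hs : 0 < s) (hst : s ≤ t) :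
    ∑ i, exp (-t * d i) ≤ exp (-t * freeEnergy d s) := by
  set F := freeEnergy d s
  have hweight : ∀ i, exp (-t * (d i - F)) ≤ exp (-s * (d i - F)) := fun i =>
    exp_le_exp.mpr (mul_le_mul_of_nonneg_right (neg_le_neg hst) (sub_nonneg.mpr (le_apply d hs i)))
  calc ∑ i, exp (-t * d i) = exp (-t * F) * ∑ i, exp (-t * (d i - F)) := by
        rw [Finset.mul_sum]
        exact Finset.sum_congr rfl fun i _ => by rw [← exp_add]; ring_nf
    _ ≤ exp (-t * F) * ∑ i, exp (-s * (d i - F)) :=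
        mul_le_mul_of_nonneg_left (Finset.sum_le_sum fun i _ => hweight i) (exp_pos _).le
    _ = exp (-t * F) * (exp (-s * F) * exp (s * F)) := by
        rw [exp_neg_mul_eq_sum_exp d hs.ne', Finset.sum_mul]
        exact congrArg _ (Finset.sum_congr rfl fun i _ => by rw [← exp_add]; ring_nf)
    _ = exp (-t * F) := by rw [← exp_add, neg_mul s, neg_add_cancel, exp_zero, mul_one]

theorem monotoneOn : MonotoneOn (freeEnergy d) (Ioi 0) := by
  intro s (hs : 0 < s) t (ht : 0 < t) hst
  rcases isEmpty_or_nonempty ι with hι | hι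
  · simp [freeEnergy]
  have hlog : log (∑ i, exp (-t * d i)) ≤ -t * freeEnergy d s :=
    (log_le_iff_le_exp (Finset.sum_pos (fun i _ => exp_pos _) Finset.univ_nonempty)).mpr
      (sum_exp_le_exp_mul d hs hst)
  calc freeEnergy d s = -t⁻¹ * (-t * freeEnergy d s) := by field_simp
    _ ≤ freeEnergy d t :=
        mul_le_mul_of_nonpos_left hlog (neg_nonpos.mpr (inv_pos.mpr ht).le)

end freeEnergy

theorem neg_logsumexp_monotone_in_temperature_general (C : ℕ) (d : Fin C → ℝ) :
    ∀ τ₁ τ₂ : ℝ, 0 < τ₁ → τ₁ ≤ τ₂ →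
      -(2 / τ₁) * Real.log (∑ c, Real.exp (-(τ₁ / 2) * d c)) ≤
        -(2 / τ₂) * Real.log (∑ c, Real.exp (-(τ₂ / 2) * d c)) := by
  intro τ₁ τ₂ h₁ h₁₂
  simpa only [freeEnergy, inv_div] using
    freeEnergy.monotoneOn d (half_pos h₁) (half_pos (h₁.trans_le h₁₂)) (by linarith)

/-- The scaled negative log-sum-exp is non-decreasing in the temperature τ on (0, ∞). -/
theorem neg_logsumexp_monotone_in_temperature (C : ℕ) (hC : 0 < C) (d : Fin C → ℝ) :
    ∀ τ₁ τ₂ : ℝ, 0 < τ₁ → τ₁ ≤ τ₂ →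
      -(2 / τ₁) * Real.log (∑ c, Real.exp (-(τ₁ / 2) * d c)) ≤
        -(2 / τ₂) * Real.log (∑ c, Real.exp (-(τ₂ / 2) * d c)) :=
  neg_logsumexp_monotone_in_temperature_general C d
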